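/- For every d ≥ 3, the subgroup G = ⟨b_1, ..., b_{d-1}⟩ of the Hanoi Towers group is self-similar, fractal and level transitive. -/

import Mathlib

open Equiv

namespace TreeFract

variable {X : Type*}

/-- The automorphism group of the rooted `d`-adic tree with vertex set the free
monoid `List X`: permutations of the vertex set fixing the root and sending
children of a vertex to children of its image (this is exactly incidence
preservation for the rooted tree). -/
def AutT (X : Type*) : Subgroup (Equiv.Perm (List X)) where
  carrier := {g | g [] = [] ∧ ∀ (u : List X) (x : X), ∃ y : X, g (u ++ [x]) = g u ++ [y]}
  one_mem' := ⟨rfl, fun _ x => ⟨x, rfl⟩⟩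
  mul_mem' := by
    rintro f g ⟨hf1, hf2⟩ ⟨hg1, hg2⟩
    refine ⟨?_, fun u x => ?_⟩
    · show f (g []) = []
      rw [hg1, hf1]
    · obtain ⟨y, hy⟩ := hg2 u x
      obtain ⟨z, hz⟩ := hf2 (g u) y
      exact ⟨z, by show f (g (u ++ [x])) = f (g u) ++ [z]; rw [hy, hz]⟩
  inv_mem' := by
    rintro g ⟨hg1, hg2⟩
    have hinj := g.injective
    refine ⟨?_, fun u x => ?_⟩
    · apply hinj
      show g (g⁻¹ []) = g []
      rw [(show ∀ (e : Equiv.Perm (List X)) (x : List X), e (e⁻¹ x) = x from fun e x => Equiv.apply_symm_apply e x), hg1]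
    · have hne : g⁻¹ (u ++ [x]) ≠ [] := by
        intro h
        have h2 : u ++ [x] = g [] := by
          conv_lhs => rw [← (show ∀ (e : Equiv.Perm (List X)) (x : List X), e (e⁻¹ x) = x from fun e x => Equiv.apply_symm_apply e x) g (u ++ [x]), h]
        rw [hg1] at h2
        simp at h2
      obtain ⟨y, hy⟩ : ∃ y, g⁻¹ (u ++ [x]) = (g⁻¹ (u ++ [x])).dropLast ++ [y] :=
        ⟨(g⁻¹ (u ++ [x])).getLast hne, (List.dropLast_append_getLast hne).symm⟩
      obtain ⟨z, hz⟩ := hg2 ((g⁻¹ (u ++ [x])).dropLast) y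
      have happ : g ((g⁻¹ (u ++ [x])).dropLast) ++ [z] = u ++ [x] := by
        rw [← hz, ← hy, (show ∀ (e : Equiv.Perm (List X)) (x : List X), e (e⁻¹ x) = x from fun e x => Equiv.apply_symm_apply e x)]
      have h2 : g ((g⁻¹ (u ++ [x])).dropLast) = u ∧ ([z] : List X) = [x] :=
        List.append_inj' happ rfl
      refine ⟨y, ?_⟩
      rw [hy]
      congr 1
      apply hinj
      rw [(show ∀ (e : Equiv.Perm (List X)) (x : List X), e (e⁻¹ x) = x from fun e x => Equiv.apply_symm_apply e x), h2.1]

/-- The underlying function of the section of `g` at the vertex `u`. -/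
def sectFun (g : Equiv.Perm (List X)) (u : List X) : List X → List X :=
  fun v => (g (u ++ v)).drop (g u).length

open scoped Classical in
/-- The section `g_u` of a tree automorphism `g` at a vertex `u`, i.e. the unique
automorphism with `g (u ++ v) = g u ++ g_u v` for all `v`.  (By convention it is
the identity for permutations which are not tree automorphisms.) -/
noncomputable def sect (g : Equiv.Perm (List X)) (u : List X) : Equiv.Perm (List X) :=
  if h : Function.Bijective (sectFun g u) then Equiv.ofBijective _ h else 1

/-- The underlying function of the label of `g` at the vertex `u`. -/
def labelFun (g : Equiv.Perm (List X)) (u : List X) : X → X :=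
  fun x => (g (u ++ [x])).getLastD x

open scoped Classical in
/-- The label `g_(u)` of a tree automorphism `g` at a vertex `u`: the permutation
of `X` with `g (u ++ [x]) = g u ++ [g_(u) x]`.  (By convention it is the identity
for permutations which are not tree automorphisms.) -/
noncomputable def label (g : Equiv.Perm (List X)) (u : List X) : Equiv.Perm X :=
  if h : Function.Bijective (labelFun g u) then Equiv.ofBijective _ h else 1

/-- The stabilizer `st_G(u)` of the vertex `u` in `G`. -/
def stV (G : Subgroup (Equiv.Perm (List X))) (u : List X) : Subgroup (Equiv.Perm (List X)) where
  carrier := {g | g ∈ G ∧ g u = u}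
  one_mem' := ⟨one_mem G, rfl⟩
  mul_mem' := by
    rintro f g ⟨hf, hf2⟩ ⟨hg, hg2⟩
    exact ⟨mul_mem hf hg, by show f (g u) = u; rw [hg2, hf2]⟩
  inv_mem' := by
    rintro g ⟨hg, hg2⟩
    refine ⟨inv_mem hg, ?_⟩
    apply g.injective
    show g (g⁻¹ u) = g u
    rw [(show ∀ (e : Equiv.Perm (List X)) (x : List X), e (e⁻¹ x) = x from fun e x => Equiv.apply_symm_apply e x), hg2]

/-- The stabilizer `st_G(L_n)` of the `n`-th level in `G`. -/
def stL (G : Subgroup (Equiv.Perm (List X))) (n : ℕ) : Subgroup (Equiv.Perm (List X)) where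
  carrier := {g | g ∈ G ∧ ∀ u : List X, u.length = n → g u = u}
  one_mem' := ⟨one_mem G, fun _ _ => rfl⟩
  mul_mem' := by
    rintro f g ⟨hf, hf2⟩ ⟨hg, hg2⟩
    exact ⟨mul_mem hf hg, fun u hu => by show f (g u) = u; rw [hg2 u hu, hf2 u hu]⟩
  inv_mem' := by
    rintro g ⟨hg, hg2⟩
    refine ⟨inv_mem hg, fun u hu => ?_⟩
    apply g.injective
    show g (g⁻¹ u) = g u
    rw [(show ∀ (e : Equiv.Perm (List X)) (x : List X), e (e⁻¹ x) = x from fun e x => Equiv.apply_symm_apply e x), hg2 u hu]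

/-- `G` is self-similar: sections of elements of `G` lie in `G`. -/
def SelfSimilar (G : Subgroup (Equiv.Perm (List X))) : Prop :=
  ∀ g ∈ G, ∀ u : List X, sect g u ∈ G

/-- `G` acts transitively on the first level of the tree. -/
def FirstLevelTransitive (G : Subgroup (Equiv.Perm (List X))) : Prop :=
  ∀ x y : X, ∃ g ∈ G, g [x] = [y]

/-- `G` is level transitive: it acts transitively on every level of the tree. -/
def LevelTransitive (G : Subgroup (Equiv.Perm (List X))) : Prop :=
  ∀ (n : ℕ) (u v : List X), u.length = n → v.length = n → ∃ g ∈ G, g u = v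

/-- `G` is fractal: `ψ_u(st_G(u)) = G` for every vertex `u`. -/
def Fractal (G : Subgroup (Equiv.Perm (List X))) : Prop :=
  ∀ u : List X,
    (fun g => sect g u) '' (stV G u : Set (Equiv.Perm (List X))) = (G : Set (Equiv.Perm (List X)))

/-- `G` is strongly fractal: `ψ_x(st_G(L_1)) = G` for every first-level vertex `x`. -/
def StronglyFractal (G : Subgroup (Equiv.Perm (List X))) : Prop :=
  ∀ x : X,
    (fun g => sect g [x]) '' (stL G 1 : Set (Equiv.Perm (List X))) = (G : Set (Equiv.Perm (List X)))

/-- `G` is super strongly fractal: `ψ_u(st_G(L_n)) = G` for every `n` and every `u ∈ L_n`. -/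
def SuperStronglyFractal (G : Subgroup (Equiv.Perm (List X))) : Prop :=
  ∀ (n : ℕ) (u : List X), u.length = n →
    (fun g => sect g u) '' (stL G n : Set (Equiv.Perm (List X))) = (G : Set (Equiv.Perm (List X)))

/-- The normal closure `⟨S⟩^G` of a subset `S ⊆ G` in the subgroup `G`, realized as a
subgroup of the ambient group: the subgroup generated by all `G`-conjugates of `S`. -/
def normalClosureIn (G : Subgroup (Equiv.Perm (List X))) (S : Set (Equiv.Perm (List X))) :
    Subgroup (Equiv.Perm (List X)) :=
  Subgroup.closure {t | ∃ g ∈ G, ∃ s ∈ S, t = g * s * g⁻¹}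

end TreeFract
namespace TreeFract

/-! ### The Hanoi towers generators -/

section Hanoi

variable {d : ℕ}

/-- The underlying function of the automorphism `a_{ij}` of the Hanoi Towers group:
it swaps the first occurrence of `i` or `j` in a word. -/
def hanoiFun (i j : Fin d) : List (Fin d) → List (Fin d)
  | [] => []
  | x :: w => if x = i then j :: w else if x = j then i :: w else x :: hanoiFun i j w

lemma hanoiFun_invol (i j : Fin d) : ∀ w, hanoiFun i j (hanoiFun i j w) = w
  | [] => rfl
  | x :: w => by
    by_cases h1 : x = i
    · subst h1
      by_cases h2 : j = x
      · simp [hanoiFun, h2]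
      · simp [hanoiFun, h2]
    · by_cases h2 : x = j
      · subst h2
        simp [hanoiFun, h1]
      · simp [hanoiFun, h1, h2, hanoiFun_invol i j w]

/-- The automorphism `a_{ij}` of the `d`-adic tree: its label at the root is the
transposition `(x_i x_j)`, its sections at the first-level vertices `x_i` and `x_j`
are trivial and all its other first-level sections equal `a_{ij}` again. -/
def hanoiA (i j : Fin d) : Equiv.Perm (List (Fin d)) :=
  ⟨hanoiFun i j, hanoiFun i j, hanoiFun_invol i j, hanoiFun_invol i j⟩

end Hanoi

/-- The generator `b_i = a_{i,i+1}` (here `i` runs through `0, …, d-2`,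
corresponding to the paper's `b_1, …, b_{d-1}`). -/
def hanoiB (d : ℕ) (i : ℕ) (h : i + 1 < d) : Equiv.Perm (List (Fin d)) :=
  hanoiA ⟨i, Nat.lt_of_succ_lt h⟩ ⟨i + 1, h⟩

/-- The subgroup `G = ⟨b_1, …, b_{d-1}⟩` of the Hanoi Towers group. -/
def hanoiGroup (d : ℕ) : Subgroup (Equiv.Perm (List (Fin d))) :=
  Subgroup.closure {g | ∃ (i : ℕ) (h : i + 1 < d), g = hanoiB d i h}

/-! ### GGS groups (and the rooted automorphism `a`) -/

section GGS

variable {p : ℕ}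

/-- The function adding `m` to the first letter of a word over `ZMod p`. -/
def rotFun (m : ZMod p) : List (ZMod p) → List (ZMod p)
  | [] => []
  | x :: w => (x + m) :: w

/-- The rooted automorphism of the `p`-adic tree whose label at the root is the
`p`-cycle `x ↦ x + m`; for `m = 1` this is the generator `a` of a GGS-group
(identifying `x_i` with `i mod p`). -/
def rotPerm (m : ZMod p) : Equiv.Perm (List (ZMod p)) :=
  ⟨rotFun m, rotFun (-m),
    by intro w; cases w <;> simp [rotFun],
    by intro w; cases w <;> simp [rotFun]⟩

/-- The underlying function of the GGS generator `b` with defining vector `e`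
(the value `e 0` is irrelevant; `e i` for `i ≠ 0` are the coordinates
`e_1, …, e_{p-1}`): `b` fixes the first level, its section at `x_i` is
`a^{e_i}` for `i = 1, …, p-1` and its section at `x_p` (identified with `0`)
is `b` again. -/
def ggsFun (e : ZMod p → ZMod p) : List (ZMod p) → List (ZMod p)
  | [] => []
  | x :: w => if x = 0 then x :: ggsFun e w else x :: rotFun (e x) w

lemma ggsFun_inv (e : ZMod p → ZMod p) : ∀ w, ggsFun (fun i => -(e i)) (ggsFun e w) = w
  | [] => rfl
  | x :: w => by
    by_cases h : x = 0
    · simp only [ggsFun, if_pos h]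
      rw [ggsFun_inv e w]
    · simp only [ggsFun, if_neg h]
      cases w <;> simp [rotFun]

/-- The GGS generator `b` with defining vector `e`, as a tree automorphism. -/
def ggsB (e : ZMod p → ZMod p) : Equiv.Perm (List (ZMod p)) :=
  ⟨ggsFun e, ggsFun (fun i => -(e i)), ggsFun_inv e, by
    intro w
    have h := ggsFun_inv (fun i => -(e i)) w
    simpa using h⟩

end GGS

/-- The GGS-group `G = ⟨a, b⟩` over the `p`-adic tree with defining vector `e`. -/
def ggsGroup (p : ℕ) (e : ZMod p → ZMod p) : Subgroup (Equiv.Perm (List (ZMod p))) :=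
  Subgroup.closure {rotPerm 1, ggsB e}

/-! ### The first Grigorchuk group -/

/-- The three directed generators `b, c, d` (for `k % 3 = 0, 1, 2` respectively) of the
first Grigorchuk group, defined by the mutual recursion
`b = (a, c)`, `c = (a, d)`, `d = (1, b)` (identifying `x_1` with `0` and `x_2` with `1`). -/
def griFun : ℕ → List (ZMod 2) → List (ZMod 2)
  | _, [] => []
  | k, x :: w => if x = 0 then (if k % 3 = 2 then x :: w else x :: rotFun 1 w)
                 else x :: griFun (k + 1) w

lemma griFun_invol : ∀ (w : List (ZMod 2)) (k : ℕ), griFun k (griFun k w) = w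
  | [], _ => rfl
  | x :: w, k => by
    by_cases h : x = 0
    · by_cases h3 : k % 3 = 2
      · simp [griFun, h, h3]
      · simp only [griFun, if_pos h, if_neg h3]
        cases w with
        | nil => rfl
        | cons y v =>
            have hy : y + 1 + 1 = y := by
              rw [add_assoc]
              simp [show (1 : ZMod 2) + 1 = 0 from rfl]
            simp [rotFun, hy]
    · simp only [griFun, if_neg h]
      rw [griFun_invol w (k + 1)]

/-- The generator `b` of the first Grigorchuk group, with sections `(a, c)`. -/
def griB : Equiv.Perm (List (ZMod 2)) :=
  ⟨griFun 0, griFun 0, fun w => griFun_invol w 0, fun w => griFun_invol w 0⟩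

/-- The generator `c` of the first Grigorchuk group, with sections `(a, d)`. -/
def griC : Equiv.Perm (List (ZMod 2)) :=
  ⟨griFun 1, griFun 1, fun w => griFun_invol w 1, fun w => griFun_invol w 1⟩

/-- The generator `d` of the first Grigorchuk group, with sections `(1, b)`. -/
def griD : Equiv.Perm (List (ZMod 2)) :=
  ⟨griFun 2, griFun 2, fun w => griFun_invol w 2, fun w => griFun_invol w 2⟩

/-- The first Grigorchuk group `𝒢 = ⟨a, b, c, d⟩` acting on the binary tree. -/
def grigorchukGroup : Subgroup (Equiv.Perm (List (ZMod 2))) :=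
  Subgroup.closure {rotPerm 1, griB, griC, griD}

end TreeFract

/-!
The generators `a_{ij}` have only `1` and `a_{ij}` as sections, so `G` is self-similar. A product
of adjacent transpositions `b_i` carries any first-level vertex `x` to any other `y` with trivial
section at `x`. Since `d ≥ 3`, each `b_i` fixes some letter `y ∉ {i, i+1}` with section `b_i`
there; conjugating by such a product shows that `b_i` is the section at `x` of an element of
`st_G(x)`. Taking sections at `x` is a homomorphism on `st_G(x)`, so all of `G` arises this way,
and gluing first-level vertices gives fractality. A fractal group which is transitive on the
first level is level transitive.
-/

namespace TreeFract

open Subgroup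

variable {X : Type*}

section Sections

variable {f g k : Perm (List X)} {u : List X}

lemma AutT.exists_apply_append (hg : g ∈ AutT X) (u v : List X) :
    ∃ w, g (u ++ v) = g u ++ w := by
  induction v using List.reverseRecOn with
  | nil => exact ⟨[], by simp⟩
  | append_singleton v x ih =>
    obtain ⟨w, hw⟩ := ih
    obtain ⟨y, hy⟩ := hg.2 (u ++ v) x
    exact ⟨w ++ [y], by rw [← List.append_assoc, hy, hw, List.append_assoc]⟩

lemma AutT.length_apply (hg : g ∈ AutT X) (u : List X) : (g u).length = u.length := by
  induction u using List.reverseRecOn with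
  | nil => simp [hg.1]
  | append_singleton u x ih =>
    obtain ⟨y, hy⟩ := hg.2 u x
    simp [hy, ih]

lemma AutT.apply_append_sectFun (hg : g ∈ AutT X) (u v : List X) :
    g (u ++ v) = g u ++ sectFun g u v := by
  obtain ⟨w, hw⟩ := AutT.exists_apply_append hg u v
  simp [sectFun, hw]

lemma AutT.sectFun_leftInverse (hg : g ∈ AutT X) (u : List X) :
    Function.LeftInverse (sectFun g⁻¹ (g u)) (sectFun g u) := fun v => by
  have h := AutT.apply_append_sectFun (inv_mem hg) (g u) (sectFun g u v)
  rw [← AutT.apply_append_sectFun hg, Perm.coe_inv, g.symm_apply_apply, g.symm_apply_apply] at h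
  exact (List.append_cancel_left h).symm

lemma AutT.sectFun_bijective (hg : g ∈ AutT X) (u : List X) :
    Function.Bijective (sectFun g u) := by
  have h := AutT.sectFun_leftInverse (inv_mem hg) (g u)
  rw [inv_inv, Perm.coe_inv, g.symm_apply_apply] at h
  exact ⟨(AutT.sectFun_leftInverse hg u).injective, h.surjective⟩

lemma AutT.apply_append (hg : g ∈ AutT X) (u v : List X) : g (u ++ v) = g u ++ sect g u v := by
  rw [sect, dif_pos (AutT.sectFun_bijective hg u)]
  exact AutT.apply_append_sectFun hg u v

lemma AutT.sect_eq_of_apply_append (hg : g ∈ AutT X) {h : Perm (List X)}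
    (hh : ∀ v, g (u ++ v) = g u ++ h v) : sect g u = h :=
  Equiv.ext fun v => List.append_cancel_left ((AutT.apply_append hg u v).symm.trans (hh v))

lemma sect_one (u : List X) : sect 1 u = 1 :=
  AutT.sect_eq_of_apply_append (one_mem _) fun _ => rfl

lemma AutT.sect_nil (hg : g ∈ AutT X) : sect g [] = g :=
  AutT.sect_eq_of_apply_append hg fun v => by simp [hg.1]

lemma AutT.sect_mul (hf : f ∈ AutT X) (hg : g ∈ AutT X) (u : List X) :
    sect (f * g) u = sect f (g u) * sect g u :=
  AutT.sect_eq_of_apply_append (mul_mem hf hg) fun v => by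
    simp only [Perm.mul_apply, AutT.apply_append hg, AutT.apply_append hf]

lemma AutT.sect_inv (hg : g ∈ AutT X) (u : List X) : sect g⁻¹ (g u) = (sect g u)⁻¹ := by
  have h := AutT.sect_mul (inv_mem hg) hg u
  rw [inv_mul_cancel, sect_one] at h
  exact eq_inv_of_mul_eq_one_left h.symm

lemma AutT.sect_mem (hg : g ∈ AutT X) (u : List X) : sect g u ∈ AutT X := by
  refine ⟨List.append_cancel_left (as := g u) ?_, fun w x => ?_⟩
  · rw [← AutT.apply_append hg, List.append_nil, List.append_nil]
  · obtain ⟨y, hy⟩ := hg.2 (u ++ w) x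
    refine ⟨y, List.append_cancel_left (as := g u) ?_⟩
    rw [← AutT.apply_append hg, ← List.append_assoc, hy, AutT.apply_append hg,
      List.append_assoc]

lemma AutT.sect_append (hg : g ∈ AutT X) (u v : List X) :
    sect g (u ++ v) = sect (sect g u) v :=
  AutT.sect_eq_of_apply_append hg fun w => by
    rw [List.append_assoc, AutT.apply_append hg, AutT.apply_append (AutT.sect_mem hg u),
      AutT.apply_append hg, List.append_assoc]

lemma AutT.length_sect_apply (hg : g ∈ AutT X) (u v : List X) : (sect g u v).length = v.length :=
  AutT.length_apply (AutT.sect_mem hg u) v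

lemma AutT.sect_inv_mul_mul_self (hk : k ∈ AutT X) (hg : g ∈ AutT X) (hgk : g (k u) = k u) :
    sect (k⁻¹ * g * k) u = (sect k u)⁻¹ * sect g (k u) * sect k u := by
  rw [AutT.sect_mul (mul_mem (inv_mem hk) hg) hk, AutT.sect_mul (inv_mem hk) hg, hgk,
    AutT.sect_inv hk]

end Sections

lemma selfSimilar_closure {S : Set (Perm (List X))} (hle : closure S ≤ AutT X)
    (hsect : ∀ s ∈ S, ∀ u, sect s u ∈ closure S) : SelfSimilar (closure S) := by
  intro g hg
  induction hg using closure_induction with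
  | mem s hs => exact hsect s hs
  | one => exact fun u => (sect_one u).symm ▸ one_mem _
  | mul f g hf hg ihf ihg =>
    exact fun u => AutT.sect_mul (hle hf) (hle hg) u ▸ mul_mem (ihf _) (ihg _)
  | inv g hg ih =>
    intro u
    have h := AutT.sect_inv (hle hg) (g⁻¹ u)
    rw [Perm.coe_inv, g.apply_symm_apply] at h
    exact h ▸ inv_mem (ih _)

section Stabilizer

variable {G : Subgroup (Perm (List X))}

/-- The map `ψ_u : st_G(u) → Aut T`. -/
noncomputable def sectHom (hG : G ≤ AutT X) (u : List X) : stV G u →* Perm (List X) where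
  toFun f := sect f u
  map_one' := sect_one u
  map_mul' f g := by
    change sect (f.1 * g.1) u = sect f.1 u * sect g.1 u
    rw [AutT.sect_mul (hG f.2.1) (hG g.2.1), g.2.2]

lemma levelTransitive_of_fractal (hG : G ≤ AutT X) (hfr : Fractal G)
    (htr : FirstLevelTransitive G) : LevelTransitive G := by
  intro n
  induction n with
  | zero =>
    intro u v hu hv
    rw [List.length_eq_zero_iff.mp hu, List.length_eq_zero_iff.mp hv]
    exact ⟨1, one_mem _, rfl⟩
  | succ n ih =>
    intro xu yv hxu hyv
    obtain ⟨x, u, rfl⟩ := List.exists_of_length_succ xu hxu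
    obtain ⟨y, v, rfl⟩ := List.exists_of_length_succ yv hyv
    obtain ⟨k, hk, hkx⟩ := htr x y
    have hku : k (x :: u) = y :: sect k [x] u := by
      simpa [hkx] using AutT.apply_append (hG hk) [x] u
    obtain ⟨g, hg, hgv⟩ :=
      ih (sect k [x] u) v (by simpa [AutT.length_sect_apply (hG hk)] using hxu)
        (by simpa using hyv)
    obtain ⟨f, ⟨hfG, hfy⟩, rfl⟩ : g ∈ (fun f => sect f [y]) '' (stV G [y] : Set _) := by
      rwa [hfr [y]]
    refine ⟨f * k, mul_mem hfG hk, ?_⟩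
    simpa [hku, hfy, hgv] using AutT.apply_append (hG hfG) [y] (sect k [x] u)

variable (hG : G ≤ AutT X)

lemma mem_range_sectHom {u : List X} {h : Perm (List X)} :
    h ∈ (sectHom hG u).range ↔ ∃ f ∈ stV G u, sect f u = h :=
  ⟨fun ⟨f, hf⟩ => ⟨f.1, f.2, hf⟩, fun ⟨f, hf, hfh⟩ => ⟨⟨f, hf⟩, hfh⟩⟩

lemma le_range_sectHom_nil : G ≤ (sectHom hG []).range := fun g hg =>
  (mem_range_sectHom hG).mpr ⟨g, ⟨hg, (hG hg).1⟩, AutT.sect_nil (hG hg)⟩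

lemma le_range_sectHom_append {u v : List X} (hu : G ≤ (sectHom hG u).range)
    (hv : G ≤ (sectHom hG v).range) : G ≤ (sectHom hG (u ++ v)).range := by
  intro g hg
  obtain ⟨h, ⟨hG', hhv⟩, rfl⟩ := (mem_range_sectHom hG).mp (hv hg)
  obtain ⟨f, ⟨hfG, hfu⟩, rfl⟩ := (mem_range_sectHom hG).mp (hu hG')
  refine (mem_range_sectHom hG).mpr ⟨f, ⟨hfG, ?_⟩, AutT.sect_append (hG hfG) u v⟩
  rw [AutT.apply_append (hG hfG), hfu, hhv]

lemma fractal_of_le_range_sectHom_singleton (hss : SelfSimilar G)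
    (hx : ∀ x, G ≤ (sectHom hG [x]).range) : Fractal G := by
  intro u
  have hu : G ≤ (sectHom hG u).range := by
    induction u with
    | nil => exact le_range_sectHom_nil hG
    | cons x u ih => exact le_range_sectHom_append hG (hx x) ih
  ext g
  refine ⟨?_, fun hg => (mem_range_sectHom hG).mp (hu hg)⟩
  rintro ⟨f, hf, rfl⟩
  exact hss f hf.1 u

end Stabilizer

section TrivialSectionMoves

variable {G : Subgroup (Perm (List X))}

def MovesWithTrivialSection (G : Subgroup (Perm (List X))) (x y : X) : Prop :=
  ∃ k ∈ G, k [x] = [y] ∧ sect k [x] = 1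

lemma MovesWithTrivialSection.refl (x : X) : MovesWithTrivialSection G x x :=
  ⟨1, one_mem _, rfl, sect_one _⟩

lemma MovesWithTrivialSection.symm (hG : G ≤ AutT X) {x y : X}
    (h : MovesWithTrivialSection G x y) : MovesWithTrivialSection G y x := by
  obtain ⟨k, hk, hkx, hks⟩ := h
  refine ⟨k⁻¹, inv_mem hk, Perm.inv_eq_iff_eq.mpr hkx.symm, ?_⟩
  rw [← hkx, AutT.sect_inv (hG hk), hks, inv_one]

lemma MovesWithTrivialSection.trans (hG : G ≤ AutT X) {x y z : X}
    (hxy : MovesWithTrivialSection G x y) (hyz : MovesWithTrivialSection G y z) :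
    MovesWithTrivialSection G x z := by
  obtain ⟨k, hk, hkx, hks⟩ := hxy
  obtain ⟨l, hl, hly, hls⟩ := hyz
  refine ⟨l * k, mul_mem hl hk, by rw [Perm.mul_apply, hkx, hly], ?_⟩
  rw [AutT.sect_mul (hG hl) (hG hk), hkx, hls, hks, one_mul]

end TrivialSectionMoves

section Hanoi

variable {d : ℕ} {i j x : Fin d}

@[simp]
lemma hanoiA_nil (i j : Fin d) : hanoiA i j [] = [] := rfl

lemma hanoiA_cons_left (i j : Fin d) (w : List (Fin d)) : hanoiA i j (i :: w) = j :: w := by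
  simp [hanoiA, hanoiFun]

lemma hanoiA_cons_right (i j : Fin d) (w : List (Fin d)) : hanoiA i j (j :: w) = i :: w := by
  by_cases h : j = i <;> simp [hanoiA, hanoiFun, h]

lemma hanoiA_cons_of_ne (hi : x ≠ i) (hj : x ≠ j) (w : List (Fin d)) :
    hanoiA i j (x :: w) = x :: hanoiA i j w := by
  simp [hanoiA, hanoiFun, hi, hj]

lemma hanoiA_mem_AutT (i j : Fin d) : hanoiA i j ∈ AutT (Fin d) := by
  refine ⟨rfl, fun u x => ?_⟩
  induction u with
  | nil =>
    by_cases hi : x = i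
    · exact ⟨j, by simp [hi, hanoiA_cons_left]⟩
    by_cases hj : x = j
    · exact ⟨i, by simp [hj, hanoiA_cons_right]⟩
    exact ⟨x, by simp [hanoiA_cons_of_ne hi hj]⟩
  | cons z u ih =>
    by_cases hi : z = i
    · exact ⟨x, by simp [hi, hanoiA_cons_left]⟩
    by_cases hj : z = j
    · exact ⟨x, by simp [hj, hanoiA_cons_right]⟩
    obtain ⟨y, hy⟩ := ih
    exact ⟨y, by simp [hanoiA_cons_of_ne hi hj, hy]⟩

lemma sect_hanoiA_singleton_of_eq (h : x = i ∨ x = j) : sect (hanoiA i j) [x] = 1 :=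
  AutT.sect_eq_of_apply_append (hanoiA_mem_AutT i j) fun v => by
    rcases h with rfl | rfl <;> simp [hanoiA_cons_left, hanoiA_cons_right]

lemma sect_hanoiA_singleton_of_ne (hi : x ≠ i) (hj : x ≠ j) :
    sect (hanoiA i j) [x] = hanoiA i j :=
  AutT.sect_eq_of_apply_append (hanoiA_mem_AutT i j) fun v => by
    simp [hanoiA_cons_of_ne hi hj]

lemma sect_hanoiA_eq_one_or_self (i j : Fin d) (u : List (Fin d)) :
    sect (hanoiA i j) u = 1 ∨ sect (hanoiA i j) u = hanoiA i j := by
  induction u with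
  | nil => exact Or.inr (AutT.sect_nil (hanoiA_mem_AutT i j))
  | cons x u ih =>
    rw [← List.singleton_append, AutT.sect_append (hanoiA_mem_AutT i j)]
    by_cases h : x = i ∨ x = j
    · exact Or.inl (by rw [sect_hanoiA_singleton_of_eq h, sect_one])
    · obtain ⟨hi, hj⟩ := not_or.mp h
      rwa [sect_hanoiA_singleton_of_ne hi hj]

lemma hanoiB_mem_hanoiGroup (n : ℕ) (hn : n + 1 < d) : hanoiB d n hn ∈ hanoiGroup d :=
  subset_closure ⟨n, hn, rfl⟩

lemma hanoiGroup_le_AutT : hanoiGroup d ≤ AutT (Fin d) :=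
  (closure_le _).mpr fun _ ⟨_, _, hg⟩ => hg ▸ hanoiA_mem_AutT _ _

lemma hanoiGroup_selfSimilar : SelfSimilar (hanoiGroup d) := by
  refine selfSimilar_closure hanoiGroup_le_AutT ?_
  rintro _ ⟨n, hn, rfl⟩ u
  rcases sect_hanoiA_eq_one_or_self ⟨n, by omega⟩ ⟨n + 1, hn⟩ u with h | h
  · rw [hanoiB, h]
    exact one_mem _
  · rw [hanoiB, h]
    exact hanoiB_mem_hanoiGroup n hn

lemma hanoiGroup_movesWithTrivialSection (x y : Fin d) :
    MovesWithTrivialSection (hanoiGroup d) x y := by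
  have from_zero : ∀ (m : ℕ) (hm : m < d),
      MovesWithTrivialSection (hanoiGroup d) ⟨0, x.pos⟩ ⟨m, hm⟩ := by
    intro m
    induction m with
    | zero => exact fun _ => .refl _
    | succ m ih =>
      intro hm
      refine (ih (by omega)).trans hanoiGroup_le_AutT
        ⟨hanoiB d m hm, hanoiB_mem_hanoiGroup m hm, ?_, sect_hanoiA_singleton_of_eq (.inl rfl)⟩
      simp [hanoiB, hanoiA_cons_left]
  exact ((from_zero x x.2).symm hanoiGroup_le_AutT).trans hanoiGroup_le_AutT (from_zero y y.2)

lemma hanoiGroup_firstLevelTransitive : FirstLevelTransitive (hanoiGroup d) := fun x y =>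
  let ⟨k, hk, hkx, _⟩ := hanoiGroup_movesWithTrivialSection x y
  ⟨k, hk, hkx⟩

lemma hanoiB_mem_range_sectHom (hd : 3 ≤ d) (n : ℕ) (hn : n + 1 < d) (x : Fin d) :
    hanoiB d n hn ∈ (sectHom hanoiGroup_le_AutT [x]).range := by
  obtain ⟨y, hyn, hyn'⟩ :=
    Fin.exists_ne_and_ne_of_two_lt (⟨n, by omega⟩ : Fin d) ⟨n + 1, hn⟩ (by omega)
  obtain ⟨k, hk, hkx, hks⟩ := hanoiGroup_movesWithTrivialSection x y
  have hb := hanoiB_mem_hanoiGroup n hn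
  have hby : hanoiB d n hn (k [x]) = k [x] := by
    rw [hkx, hanoiB, hanoiA_cons_of_ne hyn hyn']
    rfl
  refine (mem_range_sectHom hanoiGroup_le_AutT).mpr
    ⟨k⁻¹ * hanoiB d n hn * k, ⟨mul_mem (mul_mem (inv_mem hk) hb) hk, ?_⟩, ?_⟩
  · simp [hby]
  · rw [AutT.sect_inv_mul_mul_self (hanoiGroup_le_AutT hk) (hanoiGroup_le_AutT hb) hby, hks,
      hkx, hanoiB, sect_hanoiA_singleton_of_ne hyn hyn']
    simp

lemma hanoiGroup_fractal (hd : 3 ≤ d) : Fractal (hanoiGroup d) :=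
  fractal_of_le_range_sectHom_singleton hanoiGroup_le_AutT hanoiGroup_selfSimilar fun x =>
    (closure_le _).mpr fun _ ⟨n, hn, hg⟩ => hg ▸ hanoiB_mem_range_sectHom hd n hn x

end Hanoi

/-- For every `d ≥ 3`, the subgroup `G = ⟨b_1, …, b_{d-1}⟩` of the
Hanoi Towers group is self-similar, fractal and level transitive. -/
theorem hanoiGroup_selfSimilar_fractal_levelTransitive (d : ℕ) (hd : 3 ≤ d) :
    SelfSimilar (hanoiGroup d) ∧ Fractal (hanoiGroup d) ∧ LevelTransitive (hanoiGroup d) :=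
  ⟨hanoiGroup_selfSimilar, hanoiGroup_fractal hd,
    levelTransitive_of_fractal hanoiGroup_le_AutT (hanoiGroup_fractal hd)
      hanoiGroup_firstLevelTransitive⟩

end TreeFract
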